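/- arXiv:0802.2250 — 4 statements merged into one kernel-verified Lean document; each statement's English description precedes it below -/
import Mathlib

section
/- For every K > 0 and β ∈ (0,1) there exists δ₀ ∈ (0,1] such that the following holds for every δ ∈ (0,δ₀] and every c ∈ (0,1]. Suppose u : [−δ,δ] × [0,δ] → ℝ is continuous, is C² on the open rectangle (−δ,δ) × (0,δ), and satisfies the minimal-surface-graph equation 𝓕(u) = 0 there; suppose moreover that on (−δ,δ) × (0,δ) one has |u(s,x)| ≤ K x², |∂_s u(s,x)| ≤ K x, |∂_x u(s,x)| ≤ K x, and |∂_{ss}u|, |∂_{sx}u|, |∂_{xx}u| ≤ K; that u(s,0) ≥ 0 for all |s| ≤ δ; and that u(s,x) ≥ c x^{3+β} whenever |s| = δ or x = δ. Then u(s,x) ≥ c x^{3+β} for all (s,x) ∈ [−δ,δ] × [0,δ]. In particular, there is no function u satisfying all these hypotheses which additionally satisfies u(0,x)/x^{3+β} → 0 as x → 0⁺. -/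
/-!
Compare `u` with the barrier `c x^{3+β}`. If `u - c x^{3+β}` ever became negative, its minimum
over the closed rectangle would lie in the interior, since the difference is nonnegative on
the boundary. At an interior local minimum the `s`-slice gives `u_s = 0`, `u_ss ≥ 0`, and the
`x`-slice gives `u_x = c(3+β)x^{2+β}` and `u_xx ≥ (2+β) u_x / x`. The equation `𝓕(u) = 0` then
reads `(1+u_x²) u_ss + u_xx = 2(1+u_x²) u_x / x`, which forces `2+β ≤ 2(1+u_x²)`, i.e.
`β ≤ 2u_x²`. Choosing `δ₀ ≤ √β/(2K)` makes `|u_x| ≤ Kx` too small for that.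
-/

noncomputable section

/-- Partial derivative in the first variable `s`. -/
def pS (u : ℝ × ℝ → ℝ) (p : ℝ × ℝ) : ℝ := deriv (fun t => u (t, p.2)) p.1

/-- Partial derivative in the second variable `x`. -/
def pX (u : ℝ × ℝ → ℝ) (p : ℝ × ℝ) : ℝ := deriv (fun t => u (p.1, t)) p.2

/-- The minimal-surface-graph operator
`𝓕(u) = (1+u_x²)u_{ss} − 2 u_s u_x u_{sx} + (1+u_s²)u_{xx} − (2(1+u_x²+u_s²)/x) u_x`. -/
def Fmin (u : ℝ × ℝ → ℝ) (p : ℝ × ℝ) : ℝ :=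
  (1 + (pX u p) ^ 2) * (pS (pS u) p)
    - 2 * (pS u p) * (pX u p) * (pX (pS u) p)
    + (1 + (pS u p) ^ 2) * (pX (pX u) p)
    - (2 * (1 + (pX u p) ^ 2 + (pS u p) ^ 2) / p.2) * (pX u p)

open Filter Topology Set

theorem IsLocalMin.deriv_deriv_nonneg {f : ℝ → ℝ} {a : ℝ} (hmin : IsLocalMin f a)
    (hf : ContinuousAt f a) : 0 ≤ deriv (deriv f) a := by
  by_contra! hneg
  have hmax := isLocalMax_of_deriv_deriv_neg hneg hmin.deriv_eq_zero hf
  have hconst : f =ᶠ[𝓝 a] fun _ => f a :=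
    (hmin.and hmax).mono fun _ hx => le_antisymm hx.2 hx.1
  rw [hconst.deriv.deriv_eq, deriv_const', deriv_const] at hneg
  exact hneg.false

theorem IsLocalMin.deriv_eq_and_deriv_deriv_le_of_sub {g h : ℝ → ℝ} {a : ℝ}
    (hg : ContDiffAt ℝ 2 g a) (hh : ContDiffAt ℝ 2 h a)
    (hmin : IsLocalMin (fun t => g t - h t) a) :
    deriv g a = deriv h a ∧ deriv (deriv h) a ≤ deriv (deriv g) a := by
  have hderiv : deriv (fun t => g t - h t) =ᶠ[𝓝 a] fun t => deriv g t - deriv h t := by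
    filter_upwards [hg.eventually (by simp), hh.eventually (by simp)] with t hgt hht
    exact deriv_fun_sub (hgt.differentiableAt (by norm_num)) (hht.differentiableAt (by norm_num))
  have hfirst := hmin.deriv_eq_zero
  have hsecond := hmin.deriv_deriv_nonneg (hg.continuousAt.sub hh.continuousAt)
  rw [hderiv.eq_of_nhds] at hfirst
  rw [hderiv.deriv_eq, deriv_fun_sub ((hg.derivWithin (m := 1) (by norm_num)).differentiableAt
    one_ne_zero) ((hh.derivWithin (m := 1) (by norm_num)).differentiableAt one_ne_zero)] at hsecond
  exact ⟨by linarith, by linarith⟩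

theorem IsCompact.forall_nonneg_of_isLocalMin {X : Type*} [TopologicalSpace X] {K U : Set X}
    {v : X → ℝ} (hK : IsCompact K) (hU : IsOpen U) (hUK : U ⊆ K) (hv : ContinuousOn v K)
    (hbdry : ∀ p ∈ K \ U, 0 ≤ v p) (hint : ∀ p ∈ U, IsLocalMin v p → 0 ≤ v p) :
    ∀ p ∈ K, 0 ≤ v p := by
  intro p hp
  obtain ⟨q, hqK, hq⟩ := hK.exists_isMinOn ⟨p, hp⟩ hv
  refine le_trans ?_ (hq hp)
  by_cases hqU : q ∈ U
  · exact hint q hqU (hq.isLocalMin (mem_of_superset (hU.mem_nhds hqU) hUK))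
  · exact hbdry q ⟨hqK, hqU⟩

theorem deriv_const_mul_rpow (c r : ℝ) :
    deriv (fun t : ℝ => c * t ^ r) = fun t => c * r * t ^ (r - 1) := by
  ext t
  simp only [deriv_const_mul_field', Real.deriv_rpow_const, mul_assoc]

theorem Fmin_of_pS_eq_zero {u : ℝ × ℝ → ℝ} {p : ℝ × ℝ} (h : pS u p = 0) :
    Fmin u p = (1 + pX u p ^ 2) * pS (pS u) p + pX (pX u) p
      - 2 * (1 + pX u p ^ 2) / p.2 * pX u p := by
  rw [Fmin, h]
  ring

theorem not_isLocalMin_sub_barrier {u : ℝ × ℝ → ℝ} {s x c β : ℝ} (hc : 0 < c) (hx : 0 < x)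
    (hu : ContDiffAt ℝ 2 u (s, x)) (hF : Fmin u (s, x) = 0) (hgrad : 2 * pX u (s, x) ^ 2 < β) :
    ¬ IsLocalMin (fun q => u q - c * q.2 ^ (3 + β)) (s, x) := by
  intro hmin
  have hβ : 0 < β := lt_of_le_of_lt (by positivity) hgrad
  obtain ⟨hS1, hS2⟩ := IsLocalMin.deriv_eq_and_deriv_deriv_le_of_sub
    (g := fun t => u (t, x)) (h := fun _ => c * x ^ (3 + β))
    (hu.comp s (contDiffAt_id.prodMk contDiffAt_const)) contDiffAt_const
    (hmin.comp_continuous (g := fun t => (t, x)) (by fun_prop))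
  obtain ⟨hX1, hX2⟩ := IsLocalMin.deriv_eq_and_deriv_deriv_le_of_sub
    (g := fun t => u (s, t)) (h := fun t => c * t ^ (3 + β))
    (hu.comp x (contDiffAt_const.prodMk contDiffAt_id))
    (contDiffAt_const.mul (Real.contDiffAt_rpow_const_of_ne hx.ne'))
    (hmin.comp_continuous (g := fun t => (s, t)) (by fun_prop))
  simp only [deriv_const', deriv_const] at hS1 hS2
  simp only [deriv_const_mul_rpow] at hX1 hX2
  change pS u (s, x) = 0 at hS1
  change 0 ≤ pS (pS u) (s, x) at hS2
  change pX u (s, x) = _ at hX1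
  change _ ≤ pX (pX u) (s, x) at hX2
  rw [show 3 + β - 1 - 1 = 1 + β by ring] at hX2
  rw [show 3 + β - 1 = 1 + β + 1 by ring, Real.rpow_add_one hx.ne'] at hX1
  set T := c * (3 + β) * x ^ (1 + β)
  have hT : 0 < T := by positivity
  have hB : pX u (s, x) = x * T := by
    rw [hX1]
    ring
  have hpde : (1 + pX u (s, x) ^ 2) * pS (pS u) (s, x) + pX (pX u) (s, x)
      = 2 * (1 + pX u (s, x) ^ 2) * T := by
    rw [Fmin_of_pS_eq_zero hS1] at hF
    have hx0 : x ≠ 0 := hx.ne'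
    rw [hB] at hF ⊢
    field_simp at hF
    linarith
  have hX : (2 + β) * T ≤ pX (pX u) (s, x) := by linarith
  nlinarith [mul_nonneg (by positivity : (0:ℝ) ≤ 1 + pX u (s, x) ^ 2) hS2]

theorem sub_barrier_nonneg_of_mem_boundary {u : ℝ × ℝ → ℝ} {δ c β : ℝ} (hδ : 0 < δ)
    (hβ : 0 ≤ β) (hbot : ∀ s ∈ Icc (-δ) δ, 0 ≤ u (s, 0))
    (hedge : ∀ p ∈ Icc (-δ) δ ×ˢ Icc 0 δ, (|p.1| = δ ∨ p.2 = δ) → c * p.2 ^ (3 + β) ≤ u p) :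
    ∀ p ∈ Icc (-δ) δ ×ˢ Icc 0 δ \ Ioo (-δ) δ ×ˢ Ioo 0 δ, 0 ≤ u p - c * p.2 ^ (3 + β) := by
  rintro ⟨s, x⟩ ⟨hR, hint⟩
  by_cases hs : s ∈ Ioo (-δ) δ
  · have hx : x ∈ ({0, δ} : Set ℝ) := Icc_sdiff_Ioo_same hδ.le ▸ ⟨hR.2, fun hx => hint ⟨hs, hx⟩⟩
    rcases hx with rfl | rfl
    · simpa [Real.zero_rpow (by linarith : (3 : ℝ) + β ≠ 0)] using hbot s hR.1
    · exact sub_nonneg.2 (hedge _ hR (Or.inr rfl))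
  · have hs' : s ∈ ({-δ, δ} : Set ℝ) := Icc_sdiff_Ioo_same (neg_le_self hδ.le) ▸ ⟨hR.1, hs⟩
    exact sub_nonneg.2 (hedge _ hR (Or.inl ((abs_eq hδ.le).2 hs'.symm)))

/-- Barrier/maximum-principle estimate for solutions of the minimal-surface-graph
equation: for any `K > 0` and `β ∈ (0,1)` there is `δ₀ ∈ (0,1]` such that for all
`δ ∈ (0,δ₀]`, `c ∈ (0,1]`, any solution `u` with the stated derivative bounds which is
nonnegative on the bottom edge and satisfies `u ≥ c x^{3+β}` on the other three edges
of the rectangle `[−δ,δ] × [0,δ]` satisfies `u ≥ c x^{3+β}` on the whole rectangle;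
in particular no such `u` can also satisfy `u(0,x)/x^{3+β} → 0` as `x → 0⁺`. -/
theorem barrier_estimate_minimal_graph :
    ∀ K > (0 : ℝ), ∀ β ∈ Set.Ioo (0 : ℝ) 1, ∃ δ₀ ∈ Set.Ioc (0 : ℝ) 1,
      ∀ δ ∈ Set.Ioc (0 : ℝ) δ₀, ∀ c ∈ Set.Ioc (0 : ℝ) 1,
        ∀ u : ℝ × ℝ → ℝ,
          ContinuousOn u (Set.Icc (-δ) δ ×ˢ Set.Icc 0 δ) →
          ContDiffOn ℝ 2 u (Set.Ioo (-δ) δ ×ˢ Set.Ioo 0 δ) →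
          (∀ p ∈ Set.Ioo (-δ) δ ×ˢ Set.Ioo 0 δ, Fmin u p = 0) →
          (∀ p ∈ Set.Ioo (-δ) δ ×ˢ Set.Ioo 0 δ,
            |u p| ≤ K * p.2 ^ 2 ∧ |pS u p| ≤ K * p.2 ∧ |pX u p| ≤ K * p.2 ∧
            |pS (pS u) p| ≤ K ∧ |pX (pS u) p| ≤ K ∧ |pX (pX u) p| ≤ K) →
          (∀ s ∈ Set.Icc (-δ) δ, 0 ≤ u (s, 0)) →
          (∀ p ∈ Set.Icc (-δ) δ ×ˢ Set.Icc 0 δ, (|p.1| = δ ∨ p.2 = δ) →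
            c * p.2 ^ (3 + β) ≤ u p) →
          (∀ p ∈ Set.Icc (-δ) δ ×ˢ Set.Icc 0 δ, c * p.2 ^ (3 + β) ≤ u p) ∧
          ¬ Filter.Tendsto (fun x : ℝ => u (0, x) / x ^ (3 + β))
              (nhdsWithin 0 (Set.Ioi 0)) (nhds 0) := by
  rintro K hK β ⟨hβ, -⟩
  refine ⟨min 1 (√β / (2 * K)), ⟨by positivity, min_le_left _ _⟩, ?_⟩
  rintro δ ⟨hδ, hδδ₀⟩ c ⟨hc, -⟩ u hcont hC2 hpde hbnd hbot hedge
  have hO : IsOpen (Ioo (-δ) δ ×ˢ Ioo 0 δ) := isOpen_Ioo.prod isOpen_Ioo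
  have hKδ : 2 * (K * δ) ≤ √β := by
    have := hδδ₀.trans (min_le_right _ _)
    rwa [le_div_iff₀' (by positivity), mul_assoc] at this
  have hgrad : ∀ p ∈ Ioo (-δ) δ ×ˢ Ioo 0 δ, 2 * pX u p ^ 2 < β := fun p hp => by
    have hpX : |pX u p| ≤ K * δ :=
      (hbnd p hp).2.2.1.trans (mul_le_mul_of_nonneg_left hp.2.2.le hK.le)
    nlinarith [sq_abs (pX u p), abs_nonneg (pX u p), Real.sq_sqrt hβ.le]
  have hlower : ∀ p ∈ Icc (-δ) δ ×ˢ Icc 0 δ, c * p.2 ^ (3 + β) ≤ u p := fun p hp =>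
    sub_nonneg.1 <| (isCompact_Icc.prod isCompact_Icc).forall_nonneg_of_isLocalMin
      (v := fun p => u p - c * p.2 ^ (3 + β)) hO (prod_mono Ioo_subset_Icc_self Ioo_subset_Icc_self)
      (hcont.sub (continuous_const.mul
        (continuous_snd.rpow_const fun _ => Or.inr (by linarith))).continuousOn)
      (sub_barrier_nonneg_of_mem_boundary hδ hβ.le hbot hedge)
      (fun ⟨_, _⟩ hq hmin => (not_isLocalMin_sub_barrier hc hq.2.1
        (hC2.contDiffAt (hO.mem_nhds hq)) (hpde _ hq) (hgrad _ hq) hmin).elim) p hp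
  refine ⟨hlower, fun hlim => hc.not_ge (ge_of_tendsto hlim ?_)⟩
  filter_upwards [Ioo_mem_nhdsGT hδ] with x hx
  rw [le_div_iff₀ (Real.rpow_pos_of_pos hx.1 _)]
  exact hlower (0, x) ⟨⟨by linarith, hδ.le⟩, hx.1.le, hx.2.le⟩
end
end

section
/- Let κ : ℝ → ℝ be continuously differentiable, let δ > 0, and let u : ℝ × [0,δ) → ℝ be such that u and all of its first and second partial derivatives exist on ℝ × (0,δ) and extend continuously up to x = 0, with u(s,0) = 0 and ∂_x u(s,0) = 0 for every s. If u satisfies 𝓕_κ(u)(s,x) = 0 for all s ∈ ℝ and all x ∈ (0,δ), then ∂_x∂_x u(s,0) = κ(s) for every s ∈ ℝ; equivalently, in the boundary expansion u(s,x) = u₂(s) x² + o(x²) the coefficient satisfies u₂(s) = κ(s)/2. -/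
open Set Filter Topology

private lemma tendsto_right {δ : ℝ} (hδ : 0 < δ) {f : ℝ × ℝ → ℝ}
    (hf : ContinuousOn f (Set.univ ×ˢ Set.Ico 0 δ)) (s : ℝ) :
    Tendsto (fun x => f (s, x)) (𝓝[>] (0:ℝ)) (𝓝 (f (s, 0))) := by
  have hmem : (s, (0:ℝ)) ∈ Set.univ ×ˢ Set.Ico 0 δ := ⟨trivial, le_refl 0, hδ⟩
  have h1 : Tendsto (fun x : ℝ => ((s, x) : ℝ × ℝ)) (𝓝[>] (0:ℝ))
      (𝓝[Set.univ ×ˢ Set.Ico 0 δ] (s, 0)) := by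
    rw [tendsto_nhdsWithin_iff]
    refine ⟨((continuous_const.prodMk continuous_id).tendsto 0).mono_left nhdsWithin_le_nhds, ?_⟩
    filter_upwards [Ioo_mem_nhdsGT_of_mem (Set.left_mem_Ico.mpr hδ)] with x hx
    exact ⟨trivial, le_of_lt hx.1, hx.2⟩
  exact (hf _ hmem).tendsto.comp h1

private lemma deriv_vanish {δ : ℝ} (hδ : 0 < δ) {f F : ℝ × ℝ → ℝ}
    (hF : ContinuousOn F (Set.univ ×ˢ Set.Ico 0 δ))
    (hd : ∀ s : ℝ, ∀ x ∈ Set.Ioo (0:ℝ) δ, HasDerivAt (fun t => f (t, x)) (F (s, x)) s)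
    (hf0 : ∀ t : ℝ, Tendsto (fun x => f (t, x)) (𝓝[>] (0:ℝ)) (𝓝 0)) (s : ℝ) :
    F (s, 0) = 0 := by
  have hKc : IsCompact (Set.Icc (s-1) (s+1) ×ˢ Set.Icc 0 (δ/2)) :=
    isCompact_Icc.prod isCompact_Icc
  have hKsub : Set.Icc (s-1) (s+1) ×ˢ Set.Icc 0 (δ/2) ⊆ Set.univ ×ˢ Set.Ico 0 δ := by
    rintro ⟨a, b⟩ ⟨_, hb⟩
    exact ⟨trivial, hb.1, lt_of_le_of_lt hb.2 (by linarith)⟩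
  have hUC : UniformContinuousOn F (Set.Icc (s-1) (s+1) ×ˢ Set.Icc 0 (δ/2)) :=
    hKc.uniformContinuousOn_of_continuous (hF.mono hKsub)
  have hTU : TendstoUniformlyOn (fun x t => F (t, x)) (fun t => F (t, 0)) (𝓝[>] (0:ℝ))
      (Set.Icc (s-1) (s+1)) := by
    rw [Metric.tendstoUniformlyOn_iff]
    intro ε hε
    obtain ⟨η, hη, hη'⟩ := Metric.uniformContinuousOn_iff.mp hUC ε hε
    have hmin : (0:ℝ) < min η (δ/2) := lt_min hη (by linarith)
    filter_upwards [Ioo_mem_nhdsGT_of_mem (Set.left_mem_Ico.mpr hmin)] with x hx t ht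
    have h1 : ((t, (0:ℝ)) : ℝ × ℝ) ∈ Set.Icc (s-1) (s+1) ×ˢ Set.Icc 0 (δ/2) :=
      ⟨ht, le_refl 0, by linarith⟩
    have h2 : ((t, x) : ℝ × ℝ) ∈ Set.Icc (s-1) (s+1) ×ˢ Set.Icc 0 (δ/2) :=
      ⟨ht, le_of_lt hx.1, le_of_lt (lt_of_lt_of_le hx.2 (min_le_right _ _))⟩
    have hdist : dist ((t,(0:ℝ)) : ℝ × ℝ) ((t, x) : ℝ × ℝ) < η := by
      rw [Prod.dist_eq, dist_self, Real.dist_eq, zero_sub, abs_neg, abs_of_pos hx.1]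
      rw [max_eq_right hx.1.le]
      exact lt_of_lt_of_le hx.2 (min_le_left _ _)
    exact hη' _ h1 _ h2 hdist
  have hD : HasDerivAt (fun _ : ℝ => (0:ℝ)) (F (s, 0)) s := by
    apply hasDerivAt_of_tendstoUniformlyOn (f := fun x t => f (t, x))
      (g := fun _ : ℝ => (0:ℝ)) (isOpen_Ioo : IsOpen (Set.Ioo (s-1) (s+1)))
      (hTU.mono Set.Ioo_subset_Icc_self) ?_ ?_
      (show s ∈ Set.Ioo (s-1) (s+1) by constructor <;> linarith)
    · filter_upwards [Ioo_mem_nhdsGT_of_mem (Set.left_mem_Ico.mpr hδ)] with x hx t _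
      exact hd t x hx
    · exact fun t _ => hf0 t
  exact hD.unique (hasDerivAt_const s (0:ℝ))

/-- Suppose `u(s,x)`, defined for `x ∈ [0,δ)`, vanishes together with `∂_x u` at `x = 0`,
all of its first and second partial derivatives exist for `0 < x < δ` (given here by the
functions `US, UX, USS, USX, UXX`) and extend continuously up to `x = 0`, and `u` solves
the minimal-surface-graph equation `𝓕_κ(u) = 0` on `ℝ × (0,δ)`, where
`𝓕_κ(u) = (1+u_x²)[w(u_{ss}+κw) − u_s(w_s − κ u_s)] − 2 u_x u_s (w u_{sx} + κ u_x u_s)`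
` + w(w²+u_s²) u_{xx} − (2 w u_x / x)(u_s² + w²(1+u_x²))`
with `w = 1 − κ(s)u` and `w_s = −κ'(s)u − κ(s)u_s`. Then `∂_x∂_x u(s,0) = κ(s)` for every
`s`; i.e. the coefficient in the boundary expansion `u = u₂(s)x² + o(x²)` is `u₂ = κ/2`. -/
theorem boundary_expansion_second_coefficient
    (κ : ℝ → ℝ) (hκ : ContDiff ℝ 1 κ) (δ : ℝ) (hδ : 0 < δ)
    (u US UX USS USX UXX : ℝ × ℝ → ℝ)
    (hu_cont : ContinuousOn u (Set.univ ×ˢ Set.Ico 0 δ))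
    (hUS_cont : ContinuousOn US (Set.univ ×ˢ Set.Ico 0 δ))
    (hUX_cont : ContinuousOn UX (Set.univ ×ˢ Set.Ico 0 δ))
    (hUSS_cont : ContinuousOn USS (Set.univ ×ˢ Set.Ico 0 δ))
    (hUSX_cont : ContinuousOn USX (Set.univ ×ˢ Set.Ico 0 δ))
    (hUXX_cont : ContinuousOn UXX (Set.univ ×ˢ Set.Ico 0 δ))
    (hS : ∀ s : ℝ, ∀ x ∈ Set.Ioo (0 : ℝ) δ, HasDerivAt (fun t => u (t, x)) (US (s, x)) s)
    (hX : ∀ s : ℝ, ∀ x ∈ Set.Ioo (0 : ℝ) δ, HasDerivAt (fun t => u (s, t)) (UX (s, x)) x)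
    (hSS : ∀ s : ℝ, ∀ x ∈ Set.Ioo (0 : ℝ) δ, HasDerivAt (fun t => US (t, x)) (USS (s, x)) s)
    (hSX : ∀ s : ℝ, ∀ x ∈ Set.Ioo (0 : ℝ) δ, HasDerivAt (fun t => US (s, t)) (USX (s, x)) x)
    (hXX : ∀ s : ℝ, ∀ x ∈ Set.Ioo (0 : ℝ) δ, HasDerivAt (fun t => UX (s, t)) (UXX (s, x)) x)
    (hu0 : ∀ s : ℝ, u (s, 0) = 0)
    (hux0 : ∀ s : ℝ, UX (s, 0) = 0)
    (hPDE : ∀ s : ℝ, ∀ x ∈ Set.Ioo (0 : ℝ) δ,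
      (1 + (UX (s, x)) ^ 2) *
          ((1 - κ s * u (s, x)) * (USS (s, x) + κ s * (1 - κ s * u (s, x)))
            - US (s, x) * ((-(deriv κ s) * u (s, x) - κ s * US (s, x)) - κ s * US (s, x)))
        - 2 * UX (s, x) * US (s, x) *
            ((1 - κ s * u (s, x)) * USX (s, x) + κ s * UX (s, x) * US (s, x))
        + (1 - κ s * u (s, x)) * ((1 - κ s * u (s, x)) ^ 2 + (US (s, x)) ^ 2) * UXX (s, x)
        - (2 * (1 - κ s * u (s, x)) * UX (s, x) / x) *
            ((US (s, x)) ^ 2 + (1 - κ s * u (s, x)) ^ 2 * (1 + (UX (s, x)) ^ 2)) = 0) :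
    ∀ s : ℝ, UXX (s, 0) = κ s := by
  have tu := tendsto_right hδ hu_cont
  have tUS := tendsto_right hδ hUS_cont
  have tUX := tendsto_right hδ hUX_cont
  have tUSS := tendsto_right hδ hUSS_cont
  have tUSX := tendsto_right hδ hUSX_cont
  have tUXX := tendsto_right hδ hUXX_cont
  have hUS0 : ∀ t : ℝ, US (t, 0) = 0 := fun t =>
    deriv_vanish hδ hUS_cont hS (fun r => by simpa [hu0 r] using tu r) t
  have hUSS0 : ∀ t : ℝ, USS (t, 0) = 0 := fun t =>
    deriv_vanish hδ hUSS_cont hSS (fun r => by simpa [hUS0 r] using tUS r) t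
  intro s
  have h_u : Filter.Tendsto (fun x => u (s, x)) (nhdsWithin 0 (Set.Ioi 0)) (nhds 0) := by
    simpa [hu0 s] using tu s
  have h_US : Filter.Tendsto (fun x => US (s, x)) (nhdsWithin 0 (Set.Ioi 0)) (nhds 0) := by
    simpa [hUS0 s] using tUS s
  have h_UX : Filter.Tendsto (fun x => UX (s, x)) (nhdsWithin 0 (Set.Ioi 0)) (nhds 0) := by
    simpa [hux0 s] using tUX s
  have h_USS : Filter.Tendsto (fun x => USS (s, x)) (nhdsWithin 0 (Set.Ioi 0)) (nhds 0) := by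
    simpa [hUSS0 s] using tUSS s
  have h_USX := tUSX s
  have h_UXX := tUXX s
  -- slope limit : UX (s, x) / x → UXX (s, 0)
  have key : ∀ x : ℝ, ∃ c : ℝ,
      x ∈ Set.Ioo (0:ℝ) δ → c ∈ Set.Ioo 0 x ∧ UXX (s, c) = UX (s, x) / x := by
    intro x
    by_cases hx : x ∈ Set.Ioo (0:ℝ) δ
    · have hcont : ContinuousOn (fun t => UX (s, t)) (Set.Icc 0 x) := by
        apply hUX_cont.comp ((continuous_const.prodMk continuous_id).continuousOn)
        intro t ht
        exact ⟨trivial, ht.1, lt_of_le_of_lt ht.2 hx.2⟩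
      have hder : ∀ t ∈ Set.Ioo (0:ℝ) x, HasDerivAt (fun t => UX (s, t)) (UXX (s, t)) t :=
        fun t ht => hXX s t ⟨ht.1, ht.2.trans hx.2⟩
      obtain ⟨c, hc, hc2⟩ := exists_hasDerivAt_eq_slope (fun t => UX (s, t))
        (fun t => UXX (s, t)) hx.1 hcont hder
      exact ⟨c, fun _ => ⟨hc, by rw [hc2, hux0 s, sub_zero, sub_zero]⟩⟩
    · exact ⟨0, fun h => absurd h hx⟩
  choose c hc using key
  have hcto0 : Filter.Tendsto c (nhdsWithin 0 (Set.Ioi 0)) (nhds 0) := by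
    apply tendsto_of_tendsto_of_tendsto_of_le_of_le' tendsto_const_nhds
      (Filter.tendsto_id.mono_right nhdsWithin_le_nhds)
    · filter_upwards [Ioo_mem_nhdsGT_of_mem (Set.left_mem_Ico.mpr hδ)] with x hx
      exact ((hc x hx).1.1).le
    · filter_upwards [Ioo_mem_nhdsGT_of_mem (Set.left_mem_Ico.mpr hδ)] with x hx
      exact ((hc x hx).1.2).le
  have hcprod : Filter.Tendsto (fun x => ((s, c x) : ℝ × ℝ)) (nhdsWithin 0 (Set.Ioi 0))
      (nhdsWithin (s, 0) (Set.univ ×ˢ Set.Ico 0 δ)) := by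
    rw [tendsto_nhdsWithin_iff]
    refine ⟨tendsto_const_nhds.prodMk_nhds hcto0, ?_⟩
    filter_upwards [Ioo_mem_nhdsGT_of_mem (Set.left_mem_Ico.mpr hδ)] with x hx
    exact ⟨trivial, (hc x hx).1.1.le, lt_trans (hc x hx).1.2 hx.2⟩
  have hslope : Filter.Tendsto (fun x => UX (s, x) / x) (nhdsWithin 0 (Set.Ioi 0))
      (nhds (UXX (s, 0))) := by
    have h := (hUXX_cont (s, 0) ⟨trivial, le_refl 0, hδ⟩).tendsto.comp hcprod
    apply h.congr'
    filter_upwards [Ioo_mem_nhdsGT_of_mem (Set.left_mem_Ico.mpr hδ)] with x hx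
    exact (hc x hx).2
  -- limits of A and B
  have hvec : Filter.Tendsto (fun x =>
      ((u (s,x), US (s,x), UX (s,x), USS (s,x), USX (s,x), UXX (s,x)) : ℝ×ℝ×ℝ×ℝ×ℝ×ℝ))
      (nhdsWithin 0 (Set.Ioi 0)) (nhds (0, 0, 0, 0, USX (s,0), UXX (s,0))) :=
    h_u.prodMk_nhds (h_US.prodMk_nhds (h_UX.prodMk_nhds (h_USS.prodMk_nhds (h_USX.prodMk_nhds h_UXX))))
  have hA : Filter.Tendsto (fun x =>
      (1 + (UX (s, x)) ^ 2) *
          ((1 - κ s * u (s, x)) * (USS (s, x) + κ s * (1 - κ s * u (s, x)))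
            - US (s, x) * ((-(deriv κ s) * u (s, x) - κ s * US (s, x)) - κ s * US (s, x)))
        - 2 * UX (s, x) * US (s, x) *
            ((1 - κ s * u (s, x)) * USX (s, x) + κ s * UX (s, x) * US (s, x))
        + (1 - κ s * u (s, x)) * ((1 - κ s * u (s, x)) ^ 2 + (US (s, x)) ^ 2) * UXX (s, x))
      (nhdsWithin 0 (Set.Ioi 0)) (nhds (κ s + UXX (s, 0))) := by
    have hcontA : Continuous (fun p : ℝ×ℝ×ℝ×ℝ×ℝ×ℝ =>
        (1 + p.2.2.1 ^ 2) * ((1 - κ s * p.1) * (p.2.2.2.1 + κ s * (1 - κ s * p.1))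
            - p.2.1 * ((-(deriv κ s) * p.1 - κ s * p.2.1) - κ s * p.2.1))
        - 2 * p.2.2.1 * p.2.1 * ((1 - κ s * p.1) * p.2.2.2.2.1 + κ s * p.2.2.1 * p.2.1)
        + (1 - κ s * p.1) * ((1 - κ s * p.1) ^ 2 + p.2.1 ^ 2) * p.2.2.2.2.2) := by fun_prop
    have h := (hcontA.tendsto _).comp hvec
    simp only [Function.comp_def] at h
    norm_num at h
    convert h using 2
    ring
  have hB : Filter.Tendsto (fun x =>
      2 * (1 - κ s * u (s, x)) *
        ((US (s, x)) ^ 2 + (1 - κ s * u (s, x)) ^ 2 * (1 + (UX (s, x)) ^ 2)))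
      (nhdsWithin 0 (Set.Ioi 0)) (nhds 2) := by
    have hcontB : Continuous (fun p : ℝ×ℝ×ℝ×ℝ×ℝ×ℝ =>
        2 * (1 - κ s * p.1) * (p.2.1 ^ 2 + (1 - κ s * p.1) ^ 2 * (1 + p.2.2.1 ^ 2))) := by
      fun_prop
    have h := (hcontB.tendsto _).comp hvec
    simp only [Function.comp_def] at h
    norm_num at h
    exact h
  have hL := hslope.mul hB
  have heq : (fun x => UX (s, x) / x *
      (2 * (1 - κ s * u (s, x)) *
        ((US (s, x)) ^ 2 + (1 - κ s * u (s, x)) ^ 2 * (1 + (UX (s, x)) ^ 2))))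
      =ᶠ[nhdsWithin 0 (Set.Ioi 0)] (fun x =>
      (1 + (UX (s, x)) ^ 2) *
          ((1 - κ s * u (s, x)) * (USS (s, x) + κ s * (1 - κ s * u (s, x)))
            - US (s, x) * ((-(deriv κ s) * u (s, x) - κ s * US (s, x)) - κ s * US (s, x)))
        - 2 * UX (s, x) * US (s, x) *
            ((1 - κ s * u (s, x)) * USX (s, x) + κ s * UX (s, x) * US (s, x))
        + (1 - κ s * u (s, x)) * ((1 - κ s * u (s, x)) ^ 2 + (US (s, x)) ^ 2) * UXX (s, x)) := by
    filter_upwards [Ioo_mem_nhdsGT_of_mem (Set.left_mem_Ico.mpr hδ)] with x hx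
    have hp := hPDE s x hx
    linear_combination -hp
  have hfinal := tendsto_nhds_unique (hL.congr' heq) hA
  linarith
end

section
/- Let L, ρ > 0, let κ : ℝ → ℝ be continuous and L-periodic, and let u : ℝ × [0,ρ] → ℝ be C² (up to the boundary x = 0) and L-periodic in s, with u(s,0) = 0 and ∂_x u(s,0) = 0 for all s. Define ℓ(ε) = ∫₀^L sqrt((∂_s u(s,ε))² + (1 − κ(s) u(s,ε))²) ds for ε ∈ (0,ρ]. Then there exist a real number A, a constant C > 0, and ε₀ ∈ (0,ρ) such that for all ε ∈ (0,ε₀], | ∫_ε^ρ ∫₀^L J_u(s,x) x^{−2} ds dx − ℓ(ε)/ε − A | ≤ C ε. In other words, the hyperbolic area of the truncated graph band equals ℓ(ε)/ε + A + O(ε), so the constant term A in this Hadamard regularization (the renormalized area of the band) is well-defined. -/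
noncomputable section

/-- The Jacobian `J_f(s,x) = sqrt((∂_s f)² + (1 − κ(s) f)² (1 + (∂_x f)²))` of the
horizontal graph of `f` over the vertical cylinder on a unit-speed plane curve of
curvature `κ`. -/
def Jgraph (κ : ℝ → ℝ) (f : ℝ × ℝ → ℝ) (p : ℝ × ℝ) : ℝ :=
  Real.sqrt ((pS f p) ^ 2 + (1 - κ p.1 * f p) ^ 2 * (1 + (pX f p) ^ 2))


/-!
Since `u` and `∂ₓu` vanish on `x = 0`, the first derivatives of `u` are `O(x)` and `u` itself is
`O(x²)`, uniformly for `s` between `0` and `L`. Hence both the area integrand `J_u` and the length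
integrand are `1 + O(x²)`, so `F(x) = ∫₀ᴸ J_u(s, x) ds` and `ℓ(x)` are `L + O(x²)`. Splitting
`F(x)/x² = L/x² + (F(x) - L)/x²`, the second term is bounded, hence integrable on `(0, ρ]`, and
`∫_ε^ρ F/x² = L/ε - L/ρ + ∫₀^ρ (F - L)/x² + O(ε)`, while `ℓ(ε)/ε = L/ε + O(ε)`.
-/

open MeasureTheory Set intervalIntegral

lemma integral_inv_sq_of_pos {a b : ℝ} (ha : 0 < a) (hb : 0 < b) :
    ∫ x in a..b, (x ^ 2)⁻¹ = a⁻¹ - b⁻¹ := by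
  have h0 : (0 : ℝ) ∉ uIcc a b := fun h => (lt_min ha hb).not_ge h.1
  have := integral_zpow (a := a) (b := b) (n := -2) (Or.inr ⟨by norm_num, h0⟩)
  simp only [zpow_neg, zpow_ofNat] at this
  rw [this]
  norm_num
  ring

lemma abs_intervalIntegral_sub_le {f : ℝ → ℝ} {a b c δ : ℝ}
    (hf : IntervalIntegrable f volume a b) (h : ∀ s ∈ uIoc a b, |f s - c| ≤ δ) :
    |(∫ s in a..b, f s) - (b - a) * c| ≤ δ * |b - a| := by
  have hsub : (∫ s in a..b, f s) - (b - a) * c = ∫ s in a..b, (f s - c) := by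
    rw [integral_sub hf intervalIntegrable_const, intervalIntegral.integral_const, smul_eq_mul]
  rw [hsub, ← Real.norm_eq_abs]
  exact norm_integral_le_of_norm_le_const h

section FinitePart

variable {F : ℝ → ℝ} {ℓ K ρ : ℝ}

lemma integrableOn_sub_div_sq (hF : ContinuousOn F (Ioc 0 ρ))
    (hFb : ∀ x ∈ Ioc 0 ρ, |F x - ℓ| ≤ K * x ^ 2) :
    IntegrableOn (fun x => (F x - ℓ) / x ^ 2) (Ioc 0 ρ) := by
  refine Integrable.mono' (integrable_const K) ?_ ?_
  · exact ((hF.sub continuousOn_const).div (continuous_pow 2).continuousOn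
      fun x hx => pow_ne_zero 2 hx.1.ne').aestronglyMeasurable measurableSet_Ioc
  · refine (ae_restrict_iff' measurableSet_Ioc).mpr (ae_of_all _ fun x hx => ?_)
    have hx2 : 0 < x ^ 2 := pow_pos hx.1 2
    rw [Real.norm_eq_abs, abs_div, abs_of_pos hx2, div_le_iff₀ hx2]
    exact hFb x hx

/-- The constant term of the Hadamard expansion of `∫ x in ε..ρ, F x / x ^ 2` at `ε = 0`. -/
def finitePart (F : ℝ → ℝ) (ℓ ρ : ℝ) : ℝ :=
  (∫ x in (0 : ℝ)..ρ, (F x - ℓ) / x ^ 2) - ℓ / ρ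

theorem abs_integral_div_sq_sub_finitePart_le (hF : ContinuousOn F (Ioc 0 ρ))
    (hFb : ∀ x ∈ Ioc 0 ρ, |F x - ℓ| ≤ K * x ^ 2) {ε : ℝ} (hε : ε ∈ Ioc 0 ρ) :
    |(∫ x in ε..ρ, F x / x ^ 2) - ℓ / ε - finitePart F ℓ ρ| ≤ K * ε := by
  obtain ⟨hε0, hερ⟩ := hε
  have hρ : 0 < ρ := hε0.trans_le hερ
  set ψ : ℝ → ℝ := fun x => (F x - ℓ) / x ^ 2
  have hψ : IntervalIntegrable ψ volume 0 ρ :=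
    (intervalIntegrable_iff_integrableOn_Ioc_of_le hρ.le).mpr (integrableOn_sub_div_sq hF hFb)
  have hψ0ε : IntervalIntegrable ψ volume 0 ε :=
    hψ.mono_set (by rw [uIcc_of_le hε0.le, uIcc_of_le hρ.le]; exact Icc_subset_Icc le_rfl hερ)
  have hψερ : IntervalIntegrable ψ volume ε ρ :=
    hψ.mono_set (by rw [uIcc_of_le hερ, uIcc_of_le hρ.le]; exact Icc_subset_Icc hε0.le le_rfl)
  have hinv : IntervalIntegrable (fun x : ℝ => ℓ * (x ^ 2)⁻¹) volume ε ρ := by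
    refine (continuousOn_const.mul ((continuous_pow 2).continuousOn.inv₀ ?_)).intervalIntegrable
    intro x hx
    rw [uIcc_of_le hερ] at hx
    exact pow_ne_zero 2 (hε0.trans_le hx.1).ne'
  have hsplit : (∫ x in ε..ρ, F x / x ^ 2) = (∫ x in ε..ρ, ψ x) + ∫ x in ε..ρ, ℓ * (x ^ 2)⁻¹ := by
    rw [← integral_add hψερ hinv]
    refine integral_congr fun x hx => ?_
    rw [uIcc_of_le hερ] at hx
    have hx0 : x ≠ 0 := (hε0.trans_le hx.1).ne'
    simp only [ψ]
    field_simp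
    ring
  have hremainder : (∫ x in ε..ρ, F x / x ^ 2) - ℓ / ε - finitePart F ℓ ρ
      = -∫ x in (0 : ℝ)..ε, ψ x := by
    rw [hsplit, intervalIntegral.integral_const_mul, integral_inv_sq_of_pos hε0 hρ, finitePart,
      ← integral_add_adjacent_intervals hψ0ε hψερ]
    ring
  rw [hremainder, abs_neg, ← Real.norm_eq_abs]
  calc ‖∫ x in (0 : ℝ)..ε, ψ x‖ ≤ K * |ε - 0| := by
        refine norm_integral_le_of_norm_le_const fun x hx => ?_
        rw [uIoc_of_le hε0.le] at hx
        have hx2 : 0 < x ^ 2 := pow_pos hx.1 2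
        rw [Real.norm_eq_abs, abs_div, abs_of_pos hx2, div_le_iff₀ hx2]
        exact hFb x ⟨hx.1, hx.2.trans hερ⟩
    _ = K * ε := by rw [sub_zero, abs_of_pos hε0]

end FinitePart

section Partials

variable {u : ℝ × ℝ → ℝ}

lemma pS_eq_fderiv_apply {p : ℝ × ℝ} (hu : DifferentiableAt ℝ u p) :
    pS u p = fderiv ℝ u p (1, 0) := by
  have hline : HasDerivAt (fun t : ℝ => (t, p.2)) ((1 : ℝ), (0 : ℝ)) p.1 :=
    (hasDerivAt_id p.1).prodMk (hasDerivAt_const _ _)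
  exact ((hu.hasFDerivAt : HasFDerivAt u _ (p.1, p.2)).comp_hasDerivAt p.1 hline).deriv

lemma pX_eq_fderiv_apply {p : ℝ × ℝ} (hu : DifferentiableAt ℝ u p) :
    pX u p = fderiv ℝ u p (0, 1) := by
  have hline : HasDerivAt (fun t : ℝ => (p.1, t)) ((0 : ℝ), (1 : ℝ)) p.2 :=
    (hasDerivAt_const _ _).prodMk (hasDerivAt_id p.2)
  exact ((hu.hasFDerivAt : HasFDerivAt u _ (p.1, p.2)).comp_hasDerivAt p.2 hline).deriv

lemma continuous_pS (hu : ContDiff ℝ 1 u) : Continuous (pS u) := by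
  have hud := hu.differentiable one_ne_zero
  rw [show pS u = fun p => fderiv ℝ u p (1, 0) from funext fun p => pS_eq_fderiv_apply (hud p)]
  exact (hu.continuous_fderiv one_ne_zero).clm_apply continuous_const

lemma continuous_pX (hu : ContDiff ℝ 1 u) : Continuous (pX u) := by
  have hud := hu.differentiable one_ne_zero
  rw [show pX u = fun p => fderiv ℝ u p (0, 1) from funext fun p => pX_eq_fderiv_apply (hud p)]
  exact (hu.continuous_fderiv one_ne_zero).clm_apply continuous_const

lemma continuous_Jgraph {κ : ℝ → ℝ} (hκ : Continuous κ) (hu : ContDiff ℝ 1 u) :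
    Continuous (Jgraph κ u) := by
  have := continuous_pS hu
  have := continuous_pX hu
  have := hu.continuous
  unfold Jgraph
  fun_prop

end Partials

lemma abs_sqrt_sub_one_le {E : ℝ} (hE : 0 ≤ E) : |Real.sqrt E - 1| ≤ |E - 1| := by
  have hfactor : |E - 1| = |Real.sqrt E - 1| * |Real.sqrt E + 1| := by
    rw [← abs_mul, show (Real.sqrt E - 1) * (Real.sqrt E + 1) = Real.sqrt E ^ 2 - 1 by ring,
      Real.sq_sqrt hE]
  rw [hfactor]
  refine le_mul_of_one_le_right (abs_nonneg _) ?_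
  rw [abs_of_nonneg (by positivity)]
  linarith [Real.sqrt_nonneg E]

lemma abs_sq_add_one_sub_sq_mul_sub_one_le {q c p a b : ℝ} (hq : |q| ≤ a) (hp : |p| ≤ a)
    (hc : |c| ≤ b) :
    |q ^ 2 + (1 - c) ^ 2 * (1 + p ^ 2) - 1| ≤ a ^ 2 * (1 + (1 + b) ^ 2) + b * (b + 2) := by
  have hq2 : q ^ 2 ≤ a ^ 2 := sq_le_sq' (abs_le.mp hq).1 (abs_le.mp hq).2
  have hp2 : p ^ 2 ≤ a ^ 2 := sq_le_sq' (abs_le.mp hp).1 (abs_le.mp hp).2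
  have hc2 : (1 - c) ^ 2 ≤ (1 + b) ^ 2 := by
    have := abs_le.mp hc
    exact sq_le_sq' (by linarith) (by linarith)
  have hcc : |c * (c - 2)| ≤ b * (b + 2) := by
    have hc_sub : |c - 2| ≤ b + 2 :=
      abs_le.mpr ⟨by linarith [abs_le.mp hc], by linarith [abs_le.mp hc]⟩
    rw [abs_mul]
    exact mul_le_mul hc hc_sub (abs_nonneg _) ((abs_nonneg c).trans hc)
  calc |q ^ 2 + (1 - c) ^ 2 * (1 + p ^ 2) - 1|
      = |(q ^ 2 + (1 - c) ^ 2 * p ^ 2) + c * (c - 2)| := by ring_nf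
    _ ≤ |q ^ 2 + (1 - c) ^ 2 * p ^ 2| + |c * (c - 2)| := abs_add_le _ _
    _ ≤ (a ^ 2 + (1 + b) ^ 2 * a ^ 2) + b * (b + 2) := by
        rw [abs_of_nonneg (by positivity)]
        gcongr
    _ = a ^ 2 * (1 + (1 + b) ^ 2) + b * (b + 2) := by ring

lemma abs_le_mul_sq_of_abs_deriv_le {f : ℝ → ℝ} {M x : ℝ} (hM : 0 ≤ M) (hx : 0 ≤ x)
    (hf : ∀ t ∈ Icc 0 x, DifferentiableAt ℝ f t) (hf0 : f 0 = 0)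
    (hf' : ∀ t ∈ Icc 0 x, |deriv f t| ≤ M * t) : |f x| ≤ M * x ^ 2 := by
  have h := Convex.norm_image_sub_le_of_norm_deriv_le hf
    (fun t ht => (hf' t ht).trans (mul_le_mul_of_nonneg_left ht.2 hM)) (convex_Icc 0 x)
    (left_mem_Icc.mpr hx) (right_mem_Icc.mpr hx)
  rw [hf0, sub_zero, sub_zero, Real.norm_eq_abs, Real.norm_eq_abs, abs_of_nonneg hx] at h
  linarith

section Bounds

variable {u : ℝ × ℝ → ℝ}

lemma exists_norm_fderiv_sub_le (hu : ContDiff ℝ 2 u) (a b ρ : ℝ) :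
    ∃ M, 0 ≤ M ∧ ∀ s ∈ Icc a b, ∀ x ∈ Icc 0 ρ,
      ‖fderiv ℝ u (s, x) - fderiv ℝ u (s, 0)‖ ≤ M * x := by
  have hu' : ContDiff ℝ 1 (fderiv ℝ u) := hu.fderiv_right (by norm_num)
  obtain ⟨M, hM⟩ := (isCompact_Icc (a := (a, (0 : ℝ))) (b := (b, ρ))).exists_bound_of_continuousOn
    (hu'.continuous_fderiv one_ne_zero).continuousOn
  refine ⟨max M 0, le_max_right _ _, fun s hs x hx => ?_⟩
  have hlip := Convex.norm_image_sub_le_of_norm_fderiv_le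
    (fun z _ => hu'.differentiable one_ne_zero z)
    (fun z hz => (hM z hz).trans (le_max_left M 0)) (convex_Icc _ _)
    (show ((s, 0) : ℝ × ℝ) ∈ Icc (a, 0) (b, ρ) from ⟨⟨hs.1, le_rfl⟩, hs.2, hx.1.trans hx.2⟩)
    (show ((s, x) : ℝ × ℝ) ∈ Icc (a, 0) (b, ρ) from ⟨⟨hs.1, hx.1⟩, hs.2, hx.2⟩)
  have hdist : ‖((s, x) : ℝ × ℝ) - (s, 0)‖ = x := by
    simp [Prod.norm_def, abs_of_nonneg hx.1, hx.1]
  rwa [hdist] at hlip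

lemma pS_eq_zero_of_forall_eq_zero {x : ℝ} (hu : ∀ s, u (s, x) = 0) (s : ℝ) :
    pS u (s, x) = 0 := by
  simp only [pS, hu, deriv_const]

lemma exists_abs_pS_le_and_abs_pX_le (hu : ContDiff ℝ 2 u) (hu0 : ∀ s, u (s, 0) = 0)
    (hux0 : ∀ s, pX u (s, 0) = 0) (a b ρ : ℝ) :
    ∃ M, 0 ≤ M ∧ ∀ s ∈ Icc a b, ∀ x ∈ Icc 0 ρ, |pS u (s, x)| ≤ M * x ∧ |pX u (s, x)| ≤ M * x := by
  obtain ⟨M, hM, hlip⟩ := exists_norm_fderiv_sub_le hu a b ρ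
  have hud : Differentiable ℝ u := hu.differentiable (by norm_num)
  have hdir : ∀ s ∈ Icc a b, ∀ x ∈ Icc 0 ρ, ∀ v : ℝ × ℝ, ‖v‖ = 1 → fderiv ℝ u (s, 0) v = 0 →
      |fderiv ℝ u (s, x) v| ≤ M * x := by
    intro s hs x hx v hv hv0
    calc |fderiv ℝ u (s, x) v| = ‖(fderiv ℝ u (s, x) - fderiv ℝ u (s, 0)) v‖ := by
          rw [sub_apply, hv0, sub_zero, Real.norm_eq_abs]
      _ ≤ ‖fderiv ℝ u (s, x) - fderiv ℝ u (s, 0)‖ * ‖v‖ := ContinuousLinearMap.le_opNorm _ _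
      _ ≤ M * x := by rw [hv, mul_one]; exact hlip s hs x hx
  refine ⟨M, hM, fun s hs x hx => ⟨?_, ?_⟩⟩
  · rw [pS_eq_fderiv_apply (hud _)]
    refine hdir s hs x hx _ (by simp [Prod.norm_def]) ?_
    rw [← pS_eq_fderiv_apply (hud _), pS_eq_zero_of_forall_eq_zero hu0]
  · rw [pX_eq_fderiv_apply (hud _)]
    refine hdir s hs x hx _ (by simp [Prod.norm_def]) ?_
    rw [← pX_eq_fderiv_apply (hud _), hux0]

end Bounds

/-- Taking `p = pX u (s, x)` bounds the area integrand `Jgraph κ u`, taking `p = 0` the length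
integrand. -/
lemma exists_abs_sqrt_graph_sub_one_le {κ : ℝ → ℝ} {u : ℝ × ℝ → ℝ} (hκ : Continuous κ)
    (hu : ContDiff ℝ 2 u) (hu0 : ∀ s, u (s, 0) = 0) (hux0 : ∀ s, pX u (s, 0) = 0) (a b ρ : ℝ) :
    ∃ K, 0 ≤ K ∧ ∀ s ∈ Icc a b, ∀ x ∈ Icc 0 ρ, ∀ p, |p| ≤ |pX u (s, x)| →
      |Real.sqrt (pS u (s, x) ^ 2 + (1 - κ s * u (s, x)) ^ 2 * (1 + p ^ 2)) - 1| ≤ K * x ^ 2 := by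
  obtain ⟨M, hM, hpartial⟩ := exists_abs_pS_le_and_abs_pX_le hu hu0 hux0 a b ρ
  obtain ⟨Mκ, hMκ⟩ := isCompact_Icc.exists_bound_of_continuousOn (hκ.continuousOn (s := Icc a b))
  set B := max Mκ 0 * M
  have hB : 0 ≤ B := by positivity
  have hu_sq : ∀ s ∈ Icc a b, ∀ x ∈ Icc 0 ρ, |u (s, x)| ≤ M * x ^ 2 := fun s hs x hx =>
    abs_le_mul_sq_of_abs_deriv_le hM hx.1
      (fun t _ => ((hu.differentiable (by norm_num)) (s, t)).comp t
        ((differentiableAt_const s).prodMk differentiableAt_id))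
      (hu0 s) (fun t ht => (hpartial s hs t ⟨ht.1, ht.2.trans hx.2⟩).2)
  refine ⟨M ^ 2 * (1 + (1 + B * ρ ^ 2) ^ 2) + B * (B * ρ ^ 2 + 2), by positivity,
    fun s hs x hx p hp => ?_⟩
  have hc : |κ s * u (s, x)| ≤ B * x ^ 2 := by
    rw [abs_mul, mul_assoc]
    exact mul_le_mul ((hMκ s hs).trans (le_max_left _ _)) (hu_sq s hs x hx) (abs_nonneg _)
      (le_max_right _ _)
  have hb : B * x ^ 2 ≤ B * ρ ^ 2 := by
    gcongr
    exacts [hx.1, hx.2]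
  obtain ⟨hS, hX⟩ := hpartial s hs x hx
  calc _ ≤ |pS u (s, x) ^ 2 + (1 - κ s * u (s, x)) ^ 2 * (1 + p ^ 2) - 1| :=
        abs_sqrt_sub_one_le (by positivity)
    _ ≤ (M * x) ^ 2 * (1 + (1 + B * x ^ 2) ^ 2) + B * x ^ 2 * (B * x ^ 2 + 2) :=
        abs_sq_add_one_sub_sq_mul_sub_one_le hS (hp.trans hX) hc
    _ ≤ (M * x) ^ 2 * (1 + (1 + B * ρ ^ 2) ^ 2) + B * x ^ 2 * (B * ρ ^ 2 + 2) := by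
        gcongr
    _ = _ := by ring

lemma exists_abs_integral_graph_sub_le {κ : ℝ → ℝ} {u : ℝ × ℝ → ℝ} (hκ : Continuous κ)
    (hu : ContDiff ℝ 2 u) (hu0 : ∀ s, u (s, 0) = 0) (hux0 : ∀ s, pX u (s, 0) = 0) (L ρ : ℝ) :
    ∃ K, 0 ≤ K ∧ ∀ x ∈ Icc 0 ρ,
      |(∫ s in (0 : ℝ)..L, Jgraph κ u (s, x)) - L| ≤ K * x ^ 2 ∧
      |(∫ s in (0 : ℝ)..L, Real.sqrt (pS u (s, x) ^ 2 + (1 - κ s * u (s, x)) ^ 2)) - L|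
        ≤ K * x ^ 2 := by
  obtain ⟨K, hK, hbound⟩ := exists_abs_sqrt_graph_sub_one_le hκ hu hu0 hux0 (0 ⊓ L) (0 ⊔ L) ρ
  have hu1 : ContDiff ℝ 1 u := hu.of_le (by norm_num)
  have hJ : Continuous (Jgraph κ u) := continuous_Jgraph hκ hu1
  have hlen : Continuous fun p : ℝ × ℝ => Real.sqrt (pS u p ^ 2 + (1 - κ p.1 * u p) ^ 2) := by
    have := continuous_pS hu1
    have := hu1.continuous
    fun_prop
  refine ⟨K * |L|, by positivity, fun x hx => ⟨?_, ?_⟩⟩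
  · have h := abs_intervalIntegral_sub_le (c := 1)
      ((hJ.comp (continuous_id.prodMk continuous_const)).intervalIntegrable 0 L)
      fun s hs => hbound s (uIoc_subset_uIcc hs) x hx _ le_rfl
    rw [sub_zero, mul_one] at h
    exact h.trans_eq (by ring)
  · have h := abs_intervalIntegral_sub_le (c := 1)
      ((hlen.comp (continuous_id.prodMk continuous_const)).intervalIntegrable 0 L)
      fun s hs => by simpa using hbound s (uIoc_subset_uIcc hs) x hx 0 (by simp)
    rw [sub_zero, mul_one] at h
    exact h.trans_eq (by ring)

theorem renormalized_area_band_well_defined_general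
    (L ρ : ℝ) (hρ : 0 < ρ)
    (κ : ℝ → ℝ) (hκc : Continuous κ)
    (u : ℝ × ℝ → ℝ) (hu : ContDiff ℝ 2 u)
    (hu0 : ∀ s : ℝ, u (s, 0) = 0)
    (hux0 : ∀ s : ℝ, pX u (s, 0) = 0) :
    ∃ (A C ε₀ : ℝ), 0 < C ∧ ε₀ ∈ Set.Ioo 0 ρ ∧
      ∀ ε ∈ Set.Ioc (0 : ℝ) ε₀,
        |(∫ x in ε..ρ, (∫ s in (0 : ℝ)..L, Jgraph κ u (s, x)) / x ^ 2)
            - (∫ s in (0 : ℝ)..L,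
                Real.sqrt ((pS u (s, ε)) ^ 2 + (1 - κ s * u (s, ε)) ^ 2)) / ε
            - A| ≤ C * ε := by
  obtain ⟨K, hK, hbound⟩ := exists_abs_integral_graph_sub_le hκc hu hu0 hux0 L ρ
  set F := fun x => ∫ s in (0 : ℝ)..L, Jgraph κ u (s, x)
  set ℓ := fun x => ∫ s in (0 : ℝ)..L, Real.sqrt ((pS u (s, x)) ^ 2 + (1 - κ s * u (s, x)) ^ 2)
  have hFc : Continuous F := continuous_parametric_intervalIntegral_of_continuous'
    (f := fun x s => Jgraph κ u (s, x))
    ((continuous_Jgraph hκc (hu.of_le (by norm_num))).comp continuous_swap) 0 L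
  refine ⟨finitePart F L ρ, 2 * K + 1, ρ / 2, by positivity, ⟨by linarith, by linarith⟩,
    fun ε hε => ?_⟩
  have hε' : ε ∈ Ioc 0 ρ := ⟨hε.1, hε.2.trans (by linarith)⟩
  have harea := abs_integral_div_sq_sub_finitePart_le hFc.continuousOn
    (fun x hx => (hbound x (Ioc_subset_Icc_self hx)).1) hε'
  have hlength : |ℓ ε / ε - L / ε| ≤ K * ε := by
    rw [← sub_div, abs_div, abs_of_pos hε.1, div_le_iff₀ hε.1]
    linarith [(hbound ε (Ioc_subset_Icc_self hε')).2]
  calc _ = |((∫ x in ε..ρ, F x / x ^ 2) - L / ε - finitePart F L ρ) - (ℓ ε / ε - L / ε)| := by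
        congr 1
        ring
    _ ≤ K * ε + K * ε := (abs_sub _ _).trans (add_le_add harea hlength)
    _ ≤ (2 * K + 1) * ε := by nlinarith [hε.1]

/-- The renormalized area of a graph band is well defined: for an `L`-periodic `C²`
graph function `u` with `u(s,0) = 0` and `∂_x u(s,0) = 0`, the hyperbolic area
`∫_ε^ρ ∫₀^L J_u x^{−2} ds dx` of the truncated band equals `ℓ(ε)/ε + A + O(ε)`, where
`ℓ(ε) = ∫₀^L sqrt((∂_s u(s,ε))² + (1 − κ(s)u(s,ε))²) ds` is the length of the curve at
height `ε` and `A` is a constant. -/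
theorem renormalized_area_band_well_defined
    (L ρ : ℝ) (hL : 0 < L) (hρ : 0 < ρ)
    (κ : ℝ → ℝ) (hκc : Continuous κ) (hκp : Function.Periodic κ L)
    (u : ℝ × ℝ → ℝ) (hu : ContDiff ℝ 2 u)
    (huper : ∀ s x : ℝ, u (s + L, x) = u (s, x))
    (hu0 : ∀ s : ℝ, u (s, 0) = 0)
    (hux0 : ∀ s : ℝ, pX u (s, 0) = 0) :
    ∃ (A C ε₀ : ℝ), 0 < C ∧ ε₀ ∈ Set.Ioo 0 ρ ∧
      ∀ ε ∈ Set.Ioc (0 : ℝ) ε₀,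
        |(∫ x in ε..ρ, (∫ s in (0 : ℝ)..L, Jgraph κ u (s, x)) / x ^ 2)
            - (∫ s in (0 : ℝ)..L,
                Real.sqrt ((pS u (s, ε)) ^ 2 + (1 - κ s * u (s, ε)) ^ 2)) / ε
            - A| ≤ C * ε :=
  renormalized_area_band_well_defined_general L ρ hρ κ hκc u hu hu0 hux0
end
end

section
/- Let L, ρ > 0 and let κ : ℝ → ℝ be continuous and L-periodic with sup |κ| = M₀. Let ũ and ũ_j (j ∈ ℕ) be C¹ functions from ℝ × [0,ρ] to ℝ, L-periodic in s, such that |ũ|, |∂_sũ|, |∂_xũ| and |ũ_j|, |∂_sũ_j|, |∂_xũ_j| are all bounded by a constant M, and assume M₀ M ρ² ≤ 1/2. Set u(s,x) = x² ũ(s,x) and u_j(s,x) = x² ũ_j(s,x). If sup over ℝ × [0,ρ] of ( |ũ_j − ũ| + |∂_s ũ_j − ∂_s ũ| + |∂_x ũ_j − ∂_x ũ| ) tends to 0 as j → ∞, and ε_j → 0⁺, then ∫_{ε_j}^ρ ∫₀^L ( J_{u_j}(s,x) − J_u(s,x) ) x^{−2} ds dx → 0 as j → ∞. -/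
/-!
Write `u = x²ũ`. Then `J_u = √(P² + R² + (RQ)²)` with `P = x² ∂ₛũ`, `R = 1 − κ x² ũ` and
`Q = 2xũ + x² ∂ₓũ`. The smallness condition `M₀ M ρ² ≤ 1/2` keeps `R` within `1/2` of `1`, so
the radicand is at least `1/4`, where `√` is `1`-Lipschitz. Since `P` and `R − 1` are `O(x²)` and
`Q` is `O(x)`, each of `P²`, `R²`, `(RQ)²` moves by `O(η x²)` when the `C¹` data move by `η`.
Hence `|J_{u_j} − J_u| ≤ C η x²`: the factor `x²` absorbs the weight `x⁻²`, and the truncated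
integrals are `O(η)` uniformly in `ε_j`.
-/

noncomputable section

open Filter Topology

theorem abs_sqrt_sub_sqrt_le_abs_sub {a b : ℝ} (ha : 1 / 4 ≤ a) (hb : 1 / 4 ≤ b) :
    |√a - √b| ≤ |a - b| := by
  have hsa : 1 / 2 ≤ √a := Real.le_sqrt_of_sq_le (by linarith)
  have hsb : 1 / 2 ≤ √b := Real.le_sqrt_of_sq_le (by linarith)
  have hab : a - b = (√a + √b) * (√a - √b) := by
    rw [← sq_sub_sq, Real.sq_sqrt (by linarith), Real.sq_sqrt (by linarith)]
  rw [hab, abs_mul, abs_of_pos (by linarith : 0 < √a + √b)]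
  exact le_mul_of_one_le_left (abs_nonneg _) (by linarith)

theorem abs_sq_sub_sq_le {u v B d : ℝ} (hu : |u| ≤ B) (hv : |v| ≤ B) (huv : |u - v| ≤ d) :
    |u ^ 2 - v ^ 2| ≤ 2 * B * d := by
  rw [sq_sub_sq, abs_mul]
  exact mul_le_mul ((abs_add_le u v).trans (by linarith)) huv (abs_nonneg _)
    (by linarith [abs_nonneg u])

theorem abs_mul_sub_mul_le (a b c d : ℝ) :
    |a * b - c * d| ≤ |a - c| * |b| + |c| * |b - d| := by
  calc |a * b - c * d| = |(a - c) * b + c * (b - d)| := by ring_nf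
    _ ≤ |a - c| * |b| + |c| * |b - d| := by
      rw [← abs_mul, ← abs_mul]
      exact abs_add_le _ _

theorem abs_sqrt_sub_sqrt_le_of_abs_sub_one_le {P R S P' R' S' : ℝ}
    (hR : |R - 1| ≤ 1 / 2) (hR' : |R' - 1| ≤ 1 / 2) :
    |√(P ^ 2 + R ^ 2 + S ^ 2) - √(P' ^ 2 + R' ^ 2 + S' ^ 2)|
      ≤ |P ^ 2 - P' ^ 2| + |R ^ 2 - R' ^ 2| + |S ^ 2 - S' ^ 2| := by
  have hquarter : ∀ {P R S : ℝ}, |R - 1| ≤ 1 / 2 → 1 / 4 ≤ P ^ 2 + R ^ 2 + S ^ 2 := by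
    intro P R S hR
    nlinarith [(abs_le.mp hR).1, sq_nonneg P, sq_nonneg S]
  refine (abs_sqrt_sub_sqrt_le_abs_sub (hquarter hR) (hquarter hR')).trans ?_
  calc _ = |(P ^ 2 - P' ^ 2) + (R ^ 2 - R' ^ 2) + (S ^ 2 - S' ^ 2)| := by ring_nf
    _ ≤ _ := (abs_add_le _ _).trans (by gcongr; exact abs_add_le _ _)

theorem tendsto_zero_of_forall_eventually_abs_le {α : Type*} {l : Filter α} {f : α → ℝ}
    (K : ℝ) (h : ∀ η > 0, ∀ᶠ j in l, |f j| ≤ K * η) : Tendsto f l (𝓝 0) := by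
  rw [Metric.tendsto_nhds]
  intro δ hδ
  have hK : 0 < |K| + 1 := by positivity
  filter_upwards [h (δ / (|K| + 1)) (div_pos hδ hK)] with j hj
  rw [Real.dist_0_eq_abs]
  calc |f j| ≤ K * (δ / (|K| + 1)) := hj
    _ ≤ |K| * (δ / (|K| + 1)) := by gcongr; exact le_abs_self K
    _ < (|K| + 1) * (δ / (|K| + 1)) := by gcongr; linarith
    _ = δ := mul_div_cancel₀ δ hK.ne'

theorem abs_integral_integral_div_sq_le {f : ℝ → ℝ → ℝ} {K L ε ρ : ℝ} (hK : 0 ≤ K)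
    (hε : 0 ≤ ε) (hερ : ε ≤ ρ) (hf : ∀ s, ∀ x ∈ Set.Ioc 0 ρ, |f s x| ≤ K * x ^ 2) :
    |∫ x in ε..ρ, (∫ s in (0 : ℝ)..L, f s x) / x ^ 2| ≤ K * |L| * ρ := by
  have hinner : ∀ x ∈ Set.uIoc ε ρ, ‖(∫ s in (0 : ℝ)..L, f s x) / x ^ 2‖ ≤ K * |L| := by
    intro x hx
    rw [Set.uIoc_of_le hερ] at hx
    have hx' : x ∈ Set.Ioc 0 ρ := ⟨hε.trans_lt hx.1, hx.2⟩
    have hx2 : 0 < x ^ 2 := pow_pos hx'.1 2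
    have h : ‖∫ s in (0 : ℝ)..L, f s x‖ ≤ K * x ^ 2 * |L - 0| :=
      intervalIntegral.norm_integral_le_of_norm_le_const fun s _ =>
        (Real.norm_eq_abs _).trans_le (hf s x hx')
    rw [sub_zero] at h
    rw [norm_div, Real.norm_of_nonneg hx2.le, div_le_iff₀ hx2]
    linarith
  calc _ = ‖∫ x in ε..ρ, (∫ s in (0 : ℝ)..L, f s x) / x ^ 2‖ := (Real.norm_eq_abs _).symm
    _ ≤ K * |L| * |ρ - ε| := intervalIntegral.norm_integral_le_of_norm_le_const hinner
    _ ≤ K * |L| * ρ := by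
      rw [abs_of_nonneg (sub_nonneg.mpr hερ)]
      gcongr
      linarith

/-- `Jscaled k x u us ux` is `J_{x²ũ}(s, x)` at a point where `κ(s) = k`, `ũ = u`, `∂ₛũ = us`
and `∂ₓũ = ux`. -/
def Jscaled (k x u us ux : ℝ) : ℝ :=
  √((x ^ 2 * us) ^ 2 + (1 - k * (x ^ 2 * u)) ^ 2 * (1 + (2 * x * u + x ^ 2 * ux) ^ 2))

theorem Jgraph_sq_mul (κ : ℝ → ℝ) {g : ℝ × ℝ → ℝ} {s x : ℝ}
    (hg : DifferentiableAt ℝ g (s, x)) :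
    Jgraph κ (fun p => p.2 ^ 2 * g p) (s, x)
      = Jscaled (κ s) x (g (s, x)) (pS g (s, x)) (pX g (s, x)) := by
  have hgx : DifferentiableAt ℝ (fun t => g (s, t)) x :=
    hg.comp x ((differentiableAt_const s).prodMk differentiableAt_id)
  have hpX : pX (fun p => p.2 ^ 2 * g p) (s, x) = 2 * x * g (s, x) + x ^ 2 * pX g (s, x) := by
    simp [pX, deriv_fun_mul (differentiableAt_pow 2) hgx, mul_comm]
  simp only [Jgraph, Jscaled, hpX, pS, deriv_const_mul_field']

theorem Jscaled_eq_sqrt (k x u us ux : ℝ) :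
    Jscaled k x u us ux = √((x ^ 2 * us) ^ 2 + (1 - k * (x ^ 2 * u)) ^ 2
      + ((1 - k * (x ^ 2 * u)) * (2 * x * u + x ^ 2 * ux)) ^ 2) := by
  rw [Jscaled]
  ring_nf

theorem abs_mul_sq_mul_le {k x u K B : ℝ} (hk : |k| ≤ K) (hu : |u| ≤ B) :
    |k * (x ^ 2 * u)| ≤ K * B * x ^ 2 := by
  have hK : 0 ≤ K := (abs_nonneg k).trans hk
  calc |k * (x ^ 2 * u)| = |k| * |u| * x ^ 2 := by
        rw [abs_mul, abs_mul, abs_of_nonneg (sq_nonneg x)]; ring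
    _ ≤ K * B * x ^ 2 := by gcongr

theorem abs_two_mul_mul_add_sq_mul_le {x ρ B u w : ℝ} (hx : 0 ≤ x) (hxρ : x ≤ ρ)
    (hu : |u| ≤ B) (hw : |w| ≤ B) : |2 * x * u + x ^ 2 * w| ≤ (2 + ρ) * B * x := by
  have hB : 0 ≤ B := (abs_nonneg u).trans hu
  have hx2 : x ^ 2 ≤ ρ * x := by nlinarith
  have hρx : 0 ≤ ρ * x := mul_nonneg (hx.trans hxρ) hx
  calc |2 * x * u + x ^ 2 * w| ≤ |2 * x * u| + |x ^ 2 * w| := abs_add_le _ _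
    _ = 2 * x * |u| + x ^ 2 * |w| := by
        rw [abs_mul, abs_mul, abs_mul, abs_two, abs_of_nonneg hx, abs_of_nonneg (sq_nonneg x)]
    _ ≤ 2 * x * B + ρ * x * B := by gcongr
    _ = (2 + ρ) * B * x := by ring

section

variable {k x ρ M₀ M : ℝ}

theorem abs_one_sub_mul_sq_mul_sub_one_le {w : ℝ} (hk : |k| ≤ M₀)
    (hsmall : M₀ * M * x ^ 2 ≤ 1 / 2) (hw : |w| ≤ M) : |1 - k * (x ^ 2 * w) - 1| ≤ 1 / 2 := by
  rw [sub_sub_cancel_left, abs_neg]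
  exact (abs_mul_sq_mul_le hk hw).trans hsmall

theorem abs_one_sub_mul_sq_mul_le {w : ℝ} (hk : |k| ≤ M₀)
    (hsmall : M₀ * M * x ^ 2 ≤ 1 / 2) (hw : |w| ≤ M) : |1 - k * (x ^ 2 * w)| ≤ 3 / 2 := by
  have h := abs_one_sub_mul_sq_mul_sub_one_le hk hsmall hw
  rw [abs_le] at h ⊢
  constructor <;> linarith

theorem abs_one_sub_mul_sq_mul_sub_le {η u v : ℝ} (hk : |k| ≤ M₀) (hdu : |u - v| ≤ η) :
    |(1 - k * (x ^ 2 * u)) - (1 - k * (x ^ 2 * v))| ≤ M₀ * η * x ^ 2 := by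
  rw [show (1 - k * (x ^ 2 * u)) - (1 - k * (x ^ 2 * v)) = k * (x ^ 2 * (v - u)) by ring]
  exact abs_mul_sq_mul_le hk (by rwa [abs_sub_comm])

theorem abs_one_sub_mul_sq_mul_mul_sub_le {η u ux v vx : ℝ} (hk : |k| ≤ M₀)
    (hx : 0 ≤ x) (hxρ : x ≤ ρ) (hsmall : M₀ * M * x ^ 2 ≤ 1 / 2)
    (hu : |u| ≤ M) (hux : |ux| ≤ M) (hv : |v| ≤ M) (hdu : |u - v| ≤ η) (hdux : |ux - vx| ≤ η) :
    |(1 - k * (x ^ 2 * u)) * (2 * x * u + x ^ 2 * ux)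
      - (1 - k * (x ^ 2 * v)) * (2 * x * v + x ^ 2 * vx)| ≤ 2 * ((2 + ρ) * η * x) := by
  have hM₀ : 0 ≤ M₀ := (abs_nonneg k).trans hk
  have hη : 0 ≤ η := (abs_nonneg _).trans hdu
  have hρ : 0 ≤ ρ := hx.trans hxρ
  have hdR := abs_one_sub_mul_sq_mul_sub_le (x := x) hk hdu
  have hdQ : |(2 * x * u + x ^ 2 * ux) - (2 * x * v + x ^ 2 * vx)| ≤ (2 + ρ) * η * x := by
    rw [show (2 * x * u + x ^ 2 * ux) - (2 * x * v + x ^ 2 * vx)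
      = 2 * x * (u - v) + x ^ 2 * (ux - vx) by ring]
    exact abs_two_mul_mul_add_sq_mul_le hx hxρ hdu hdux
  have h₁ := mul_le_mul hdR (abs_two_mul_mul_add_sq_mul_le hx hxρ hu hux) (abs_nonneg _)
    (by positivity)
  have h₂ := mul_le_mul (abs_one_sub_mul_sq_mul_le hk hsmall hv) hdQ (abs_nonneg _)
    (by norm_num)
  have h₃ : M₀ * η * x ^ 2 * ((2 + ρ) * M * x) ≤ 1 / 2 * ((2 + ρ) * η * x) :=
    calc M₀ * η * x ^ 2 * ((2 + ρ) * M * x) = (M₀ * M * x ^ 2) * ((2 + ρ) * η * x) := by ring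
      _ ≤ 1 / 2 * ((2 + ρ) * η * x) := by gcongr
  linarith [abs_mul_sub_mul_le (1 - k * (x ^ 2 * u)) (2 * x * u + x ^ 2 * ux)
    (1 - k * (x ^ 2 * v)) (2 * x * v + x ^ 2 * vx)]

theorem abs_Jscaled_sub_le {η u us ux v vs vx : ℝ} (hk : |k| ≤ M₀) (hx : 0 ≤ x)
    (hxρ : x ≤ ρ) (hsmall : M₀ * M * ρ ^ 2 ≤ 1 / 2)
    (hu : |u| ≤ M) (hus : |us| ≤ M) (hux : |ux| ≤ M)
    (hv : |v| ≤ M) (hvs : |vs| ≤ M) (hvx : |vx| ≤ M)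
    (hd : |u - v| + |us - vs| + |ux - vx| ≤ η) :
    |Jscaled k x u us ux - Jscaled k x v vs vx|
      ≤ (2 * M * ρ ^ 2 + 3 * M₀ + 6 * (2 + ρ) ^ 2 * M) * η * x ^ 2 := by
  obtain ⟨hdu, hdus, hdux⟩ : |u - v| ≤ η ∧ |us - vs| ≤ η ∧ |ux - vx| ≤ η := by
    refine ⟨?_, ?_, ?_⟩ <;>
      linarith [abs_nonneg (u - v), abs_nonneg (us - vs), abs_nonneg (ux - vx)]
  have hM : 0 ≤ M := (abs_nonneg u).trans hu
  have hM₀ : 0 ≤ M₀ := (abs_nonneg k).trans hk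
  have hx2 : x ^ 2 ≤ ρ ^ 2 := pow_le_pow_left₀ hx hxρ 2
  have hsmall' : M₀ * M * x ^ 2 ≤ 1 / 2 := le_trans (by gcongr) hsmall
  have hP : ∀ {w}, |w| ≤ M → |x ^ 2 * w| ≤ M * ρ ^ 2 := fun hw => by
    rw [abs_mul, abs_of_nonneg (sq_nonneg x), mul_comm]
    exact mul_le_mul hw hx2 (sq_nonneg x) hM
  have hdP : |x ^ 2 * us - x ^ 2 * vs| ≤ η * x ^ 2 := by
    rw [← mul_sub, abs_mul, abs_of_nonneg (sq_nonneg x), mul_comm]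
    exact mul_le_mul_of_nonneg_right hdus (sq_nonneg x)
  have hdR := abs_one_sub_mul_sq_mul_sub_le (x := x) hk hdu
  have hRQ : ∀ {w wx}, |w| ≤ M → |wx| ≤ M →
      |(1 - k * (x ^ 2 * w)) * (2 * x * w + x ^ 2 * wx)| ≤ 3 / 2 * ((2 + ρ) * M * x) :=
    fun hw hwx => by
      rw [abs_mul]
      exact mul_le_mul (abs_one_sub_mul_sq_mul_le hk hsmall' hw)
        (abs_two_mul_mul_add_sq_mul_le hx hxρ hw hwx) (abs_nonneg _) (by norm_num)
  have T₁ := abs_sq_sub_sq_le (hP hus) (hP hvs) hdP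
  have T₂ := abs_sq_sub_sq_le (abs_one_sub_mul_sq_mul_le hk hsmall' hu)
    (abs_one_sub_mul_sq_mul_le hk hsmall' hv) hdR
  have T₃ := abs_sq_sub_sq_le (hRQ hu hux) (hRQ hv hvx)
    (abs_one_sub_mul_sq_mul_mul_sub_le hk hx hxρ hsmall' hu hux hv hdu hdux)
  rw [Jscaled_eq_sqrt, Jscaled_eq_sqrt]
  refine (abs_sqrt_sub_sqrt_le_of_abs_sub_one_le (abs_one_sub_mul_sq_mul_sub_one_le hk hsmall' hu)
    (abs_one_sub_mul_sq_mul_sub_one_le hk hsmall' hv)).trans ?_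
  linarith

end

theorem band_area_difference_tendsto_zero_general
    (L ρ M₀ M : ℝ) (hρ : 0 < ρ)
    (κ : ℝ → ℝ)
    (hM₀ : IsLUB (Set.range fun s => |κ s|) M₀)
    (ut : ℝ × ℝ → ℝ) (utj : ℕ → ℝ × ℝ → ℝ)
    (hut : ContDiff ℝ 1 ut) (hutj : ∀ j, ContDiff ℝ 1 (utj j))
    (hbd : ∀ s : ℝ, ∀ x ∈ Set.Icc (0 : ℝ) ρ,
      |ut (s, x)| ≤ M ∧ |pS ut (s, x)| ≤ M ∧ |pX ut (s, x)| ≤ M)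
    (hbdj : ∀ j, ∀ s : ℝ, ∀ x ∈ Set.Icc (0 : ℝ) ρ,
      |utj j (s, x)| ≤ M ∧ |pS (utj j) (s, x)| ≤ M ∧ |pX (utj j) (s, x)| ≤ M)
    (hsmall : M₀ * M * ρ ^ 2 ≤ 1 / 2)
    (hconv : ∀ η > (0 : ℝ), ∃ N : ℕ, ∀ j ≥ N, ∀ s : ℝ, ∀ x ∈ Set.Icc (0 : ℝ) ρ,
      |utj j (s, x) - ut (s, x)| + |pS (utj j) (s, x) - pS ut (s, x)|
        + |pX (utj j) (s, x) - pX ut (s, x)| ≤ η)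
    (ε : ℕ → ℝ) (hεpos : ∀ j, 0 < ε j)
    (hε0 : Filter.Tendsto ε Filter.atTop (nhds 0)) :
    Filter.Tendsto
      (fun j : ℕ =>
        ∫ x in (ε j)..ρ, (∫ s in (0 : ℝ)..L,
          (Jgraph κ (fun p => p.2 ^ 2 * utj j p) (s, x)
            - Jgraph κ (fun p => p.2 ^ 2 * ut p) (s, x))) / x ^ 2)
      Filter.atTop (nhds 0) := by
  have hM : 0 ≤ M := (abs_nonneg _).trans (hbd 0 0 ⟨le_rfl, hρ.le⟩).1
  have hκ : ∀ s, |κ s| ≤ M₀ := fun s => hM₀.1 ⟨s, rfl⟩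
  have hM₀ : 0 ≤ M₀ := (abs_nonneg _).trans (hκ 0)
  set C := 2 * M * ρ ^ 2 + 3 * M₀ + 6 * (2 + ρ) ^ 2 * M
  refine tendsto_zero_of_forall_eventually_abs_le (C * |L| * ρ) fun η hη => ?_
  obtain ⟨N, hN⟩ := hconv η hη
  filter_upwards [eventually_ge_atTop N, hε0.eventually_lt_const hρ] with j hj hερ
  refine (abs_integral_integral_div_sq_le (K := C * η) (by positivity) (hεpos j).le hερ.le
    fun s x hx => ?_).trans_eq (by ring)
  have hx' : x ∈ Set.Icc 0 ρ := Set.Ioc_subset_Icc_self hx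
  obtain ⟨hv, hvs, hvx⟩ := hbdj j s x hx'
  obtain ⟨hu, hus, hux⟩ := hbd s x hx'
  rw [Jgraph_sq_mul κ ((hutj j).differentiable one_ne_zero _),
    Jgraph_sq_mul κ (hut.differentiable one_ne_zero _)]
  exact abs_Jscaled_sub_le (hκ s) hx.1.le hx.2 hsmall hv hvs hvx hu hus hux (hN j hj s x hx')

/-- If `u_j = x²ũ_j` converges to `u = x²ũ` in the sense that `ũ_j → ũ` in `C¹`
uniformly on the band `ℝ × [0,ρ]`, with uniform `C¹` bound `M`, `sup|κ| = M₀`, and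
`M₀ M ρ² ≤ 1/2`, then the truncated hyperbolic areas converge:
`∫_{ε_j}^ρ ∫₀^L (J_{u_j} − J_u) x^{−2} ds dx → 0` whenever `ε_j → 0⁺`. -/
theorem band_area_difference_tendsto_zero
    (L ρ M₀ M : ℝ) (hL : 0 < L) (hρ : 0 < ρ)
    (κ : ℝ → ℝ) (hκc : Continuous κ) (hκp : Function.Periodic κ L)
    (hM₀ : IsLUB (Set.range fun s => |κ s|) M₀)
    (ut : ℝ × ℝ → ℝ) (utj : ℕ → ℝ × ℝ → ℝ)
    (hut : ContDiff ℝ 1 ut) (hutj : ∀ j, ContDiff ℝ 1 (utj j))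
    (hper : ∀ s x : ℝ, ut (s + L, x) = ut (s, x))
    (hperj : ∀ j, ∀ s x : ℝ, utj j (s + L, x) = utj j (s, x))
    (hbd : ∀ s : ℝ, ∀ x ∈ Set.Icc (0 : ℝ) ρ,
      |ut (s, x)| ≤ M ∧ |pS ut (s, x)| ≤ M ∧ |pX ut (s, x)| ≤ M)
    (hbdj : ∀ j, ∀ s : ℝ, ∀ x ∈ Set.Icc (0 : ℝ) ρ,
      |utj j (s, x)| ≤ M ∧ |pS (utj j) (s, x)| ≤ M ∧ |pX (utj j) (s, x)| ≤ M)
    (hsmall : M₀ * M * ρ ^ 2 ≤ 1 / 2)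
    (hconv : ∀ η > (0 : ℝ), ∃ N : ℕ, ∀ j ≥ N, ∀ s : ℝ, ∀ x ∈ Set.Icc (0 : ℝ) ρ,
      |utj j (s, x) - ut (s, x)| + |pS (utj j) (s, x) - pS ut (s, x)|
        + |pX (utj j) (s, x) - pX ut (s, x)| ≤ η)
    (ε : ℕ → ℝ) (hεpos : ∀ j, 0 < ε j)
    (hε0 : Filter.Tendsto ε Filter.atTop (nhds 0)) :
    Filter.Tendsto
      (fun j : ℕ =>
        ∫ x in (ε j)..ρ, (∫ s in (0 : ℝ)..L,
          (Jgraph κ (fun p => p.2 ^ 2 * utj j p) (s, x)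
            - Jgraph κ (fun p => p.2 ^ 2 * ut p) (s, x))) / x ^ 2)
      Filter.atTop (nhds 0) :=
  band_area_difference_tendsto_zero_general L ρ M₀ M hρ κ hM₀ ut utj hut hutj hbd hbdj hsmall hconv
    ε hεpos hε0
end
end
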